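/- Let n ≥ 1, let E_{ij} denote the n×n matrix unit, and define Ê_{ij} = E_{ii} if i = j and Ê_{ij} = (E_{ij} + E_{ji})/√2 if i < j. Then for indices α = (i,j) and β = (k,l) with 1 ≤ i ≤ j ≤ n, 1 ≤ k ≤ l ≤ n, and (i,j) < (k,l) in lexicographic order: ‖[Ê_α, Ê_β]‖² = 1 if (i = j = k < l or i < j = k = l); ‖[Ê_α, Ê_β]‖² = 1/2 if (i < j = k < l or i = k < j < l or i < k < j = l); and ‖[Ê_α, Ê_β]‖² = 0 otherwise. -/

import Mathlib

/-!
Off the diagonal `Ê_{ab} = (E_{ab} + E_{ba}) / √2`, and `E_{ab} E_{cd} = δ_{bc} E_{ad}`. Hence the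
commutator vanishes when `{i, j}` and `{k, l}` are disjoint. Otherwise, using `Ê_{ab} = Ê_{ba}` and
the antisymmetry of the bracket, it is either `[E_{aa}, Ê_{ab}] = (E_{ab} - E_{ba}) / √2` or
`[Ê_{ab}, Ê_{bc}] = (E_{ac} - E_{ca}) / 2` for distinct `a, b, c`, of squared norm `1` and `1/2`.
-/

open Matrix BigOperators

/-- The squared Frobenius norm: sum of squares of the entries. -/
noncomputable def frobSq {n : ℕ} (A : Matrix (Fin n) (Fin n) ℝ) : ℝ :=
  ∑ i, ∑ j, (A i j) ^ 2

/-- The commutator of two matrices. -/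
def mcomm {n : ℕ} (A B : Matrix (Fin n) (Fin n) ℝ) : Matrix (Fin n) (Fin n) ℝ :=
  A * B - B * A

/-- The standard orthonormal basis element `Ê_{ij}` of the space of symmetric matrices:
`Ê_{ii} = E_{ii}` and `Ê_{ij} = (E_{ij} + E_{ji})/√2` for `i ≠ j`. -/
noncomputable def Ehat {n : ℕ} (i j : Fin n) : Matrix (Fin n) (Fin n) ℝ :=
  if i = j then Matrix.single i i (1 : ℝ)
  else (1 / Real.sqrt 2) •
    (Matrix.single i j (1 : ℝ) + Matrix.single j i (1 : ℝ))

namespace Matrix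

variable {m R : Type*} [DecidableEq m] [Semiring R]

def symSingle (a b : m) : Matrix m m R :=
  single a b 1 + single b a 1

theorem symSingle_comm (a b : m) : (symSingle a b : Matrix m m R) = symSingle b a :=
  add_comm _ _

variable [Fintype m] {a b c : m}

theorem single_mul_symSingle (hab : a ≠ b) :
    (single a a 1 * symSingle a b : Matrix m m R) = single a b 1 := by
  simp [symSingle, mul_add, hab]

theorem symSingle_mul_single (hab : a ≠ b) :
    (symSingle a b * single a a 1 : Matrix m m R) = single b a 1 := by
  simp [symSingle, add_mul, Ne.symm hab]

theorem symSingle_mul_symSingle (hab : a ≠ b) (hbc : b ≠ c) (hac : a ≠ c) :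
    (symSingle a b * symSingle b c : Matrix m m R) = single a c 1 := by
  simp [symSingle, add_mul, mul_add, hab, hbc, hac]

end Matrix

section Frobenius

variable {n : ℕ}

theorem frobSq_zero : frobSq (0 : Matrix (Fin n) (Fin n) ℝ) = 0 := by
  simp [frobSq]

theorem frobSq_smul (c : ℝ) (A : Matrix (Fin n) (Fin n) ℝ) :
    frobSq (c • A) = c ^ 2 * frobSq A := by
  simp [frobSq, mul_pow, Finset.mul_sum]

theorem frobSq_neg (A : Matrix (Fin n) (Fin n) ℝ) : frobSq (-A) = frobSq A := by
  simp [frobSq]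

theorem frobSq_single_sub_single {a b : Fin n} (hab : a ≠ b) :
    frobSq (single a b 1 - single b a 1) = 2 := by
  have hsq : ∀ i j, ((single a b 1 - single b a 1 : Matrix (Fin n) (Fin n) ℝ) i j) ^ 2 =
      (if i = a ∧ j = b then 1 else 0) + (if i = b ∧ j = a then 1 else 0) := by
    intro i j
    simp only [Matrix.sub_apply, single_apply]
    split_ifs <;> grind
  simp only [frobSq, hsq, Finset.sum_add_distrib, ite_and]
  norm_num [Finset.sum_ite_eq']

theorem frobSq_mcomm_swap (A B : Matrix (Fin n) (Fin n) ℝ) :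
    frobSq (mcomm B A) = frobSq (mcomm A B) := by
  rw [mcomm, mcomm, ← neg_sub, frobSq_neg]

end Frobenius

section Ehat

variable {n : ℕ} {a b c d : Fin n}

theorem Ehat_self (a : Fin n) : Ehat a a = single a a 1 :=
  if_pos rfl

theorem Ehat_of_ne (hab : a ≠ b) : Ehat a b = (√2)⁻¹ • symSingle a b := by
  rw [Ehat, if_neg hab, one_div, symSingle]

theorem Ehat_comm (a b : Fin n) : Ehat a b = Ehat b a := by
  rcases eq_or_ne a b with rfl | hab
  · rfl
  · rw [Ehat_of_ne hab, Ehat_of_ne hab.symm, symSingle_comm]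

theorem Ehat_mul_Ehat_of_disjoint (hac : a ≠ c) (had : a ≠ d) (hbc : b ≠ c) (hbd : b ≠ d) :
    Ehat a b * Ehat c d = 0 := by
  unfold Ehat
  split_ifs <;> simp [mul_add, add_mul, *]

theorem mcomm_Ehat_of_disjoint (hac : a ≠ c) (had : a ≠ d) (hbc : b ≠ c) (hbd : b ≠ d) :
    mcomm (Ehat a b) (Ehat c d) = 0 := by
  rw [mcomm, Ehat_mul_Ehat_of_disjoint hac had hbc hbd,
    Ehat_mul_Ehat_of_disjoint hac.symm hbc.symm had.symm hbd.symm, sub_zero]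

theorem mcomm_Ehat_self_Ehat (hab : a ≠ b) :
    mcomm (Ehat a a) (Ehat a b) = (√2)⁻¹ • (single a b 1 - single b a 1) := by
  rw [mcomm, Ehat_self, Ehat_of_ne hab, mul_smul_comm, smul_mul_assoc, single_mul_symSingle hab,
    symSingle_mul_single hab, smul_sub]

theorem mcomm_Ehat_Ehat_of_ne (hab : a ≠ b) (hbc : b ≠ c) (hac : a ≠ c) :
    mcomm (Ehat a b) (Ehat b c) = (1 / 2 : ℝ) • (single a c 1 - single c a 1) := by
  have hprod : (√2)⁻¹ * (√2)⁻¹ = (1 / 2 : ℝ) := by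
    rw [← mul_inv, Real.mul_self_sqrt zero_le_two, one_div]
  rw [mcomm, Ehat_of_ne hab, Ehat_of_ne hbc, smul_mul_smul_comm, smul_mul_smul_comm, hprod,
    symSingle_mul_symSingle hab hbc hac, symSingle_comm b c, symSingle_comm a b,
    symSingle_mul_symSingle hbc.symm hab.symm hac.symm, smul_sub]

theorem frobSq_mcomm_Ehat_self_Ehat (hab : a ≠ b) :
    frobSq (mcomm (Ehat a a) (Ehat a b)) = 1 := by
  rw [mcomm_Ehat_self_Ehat hab, frobSq_smul, frobSq_single_sub_single hab, inv_pow,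
    Real.sq_sqrt zero_le_two]
  norm_num

theorem frobSq_mcomm_Ehat_Ehat_of_ne (hab : a ≠ b) (hbc : b ≠ c) (hac : a ≠ c) :
    frobSq (mcomm (Ehat a b) (Ehat b c)) = 1 / 2 := by
  rw [mcomm_Ehat_Ehat_of_ne hab hbc hac, frobSq_smul, frobSq_single_sub_single hac]
  norm_num

end Ehat

/-- Formula (2.2): the values of `‖[Ê_α, Ê_β]‖²` for `α = (i,j) < (k,l) = β` (lexicographic
order, `i ≤ j`, `k ≤ l`): it is `1` if `i = j = k < l` or `i < j = k = l`; it is `1/2` if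
`i < j = k < l` or `i = k < j < l` or `i < k < j = l`; and `0` otherwise. -/
theorem commutator_normSq_Ehat (n : ℕ) (i j k l : Fin n)
    (hij : i ≤ j) (hkl : k ≤ l) (hlex : i < k ∨ (i = k ∧ j < l)) :
    frobSq (mcomm (Ehat i j) (Ehat k l)) =
      if (i = j ∧ j = k ∧ k < l) ∨ (i < j ∧ j = k ∧ k = l) then 1
      else if (i < j ∧ j = k ∧ k < l) ∨ (i = k ∧ k < j ∧ j < l) ∨
          (i < k ∧ k < j ∧ j = l) then 1 / 2
      else 0 := by
  rcases hij.eq_or_lt with rfl | hij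
  · rcases hlex with hik | ⟨rfl, hil⟩
    · have hil : i < l := hik.trans_le hkl
      rw [mcomm_Ehat_of_disjoint hik.ne hil.ne hik.ne hil.ne, frobSq_zero, if_neg (by omega),
        if_neg (by omega)]
    · rw [frobSq_mcomm_Ehat_self_Ehat hil.ne, if_pos (by omega)]
  rcases hlex with hik | ⟨rfl, hjl⟩
  · rcases eq_or_ne j k with rfl | hjk
    · rcases hkl.eq_or_lt with rfl | hjl
      · rw [frobSq_mcomm_swap, Ehat_comm i, frobSq_mcomm_Ehat_self_Ehat hij.ne', if_pos (by omega)]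
      · rw [frobSq_mcomm_Ehat_Ehat_of_ne hij.ne hjl.ne (hij.trans hjl).ne, if_neg (by omega),
          if_pos (by omega)]
    rcases eq_or_ne j l with rfl | hjl
    · have hkj : k < j := lt_of_le_of_ne hkl (Ne.symm hjk)
      rw [Ehat_comm k, frobSq_mcomm_Ehat_Ehat_of_ne hij.ne hkj.ne' hik.ne, if_neg (by omega),
        if_pos (by omega)]
    · rw [mcomm_Ehat_of_disjoint hik.ne (hik.trans_le hkl).ne hjk hjl, frobSq_zero,
        if_neg (by omega), if_neg (by omega)]
  · rw [Ehat_comm i j, frobSq_mcomm_Ehat_Ehat_of_ne hij.ne' (hij.trans hjl).ne hjl.ne,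
      if_neg (by omega), if_pos (by omega)]
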